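/- arXiv:1605.02114 — 3 statements merged into one kernel-verified Lean document; each statement's English description precedes it below -/
import Mathlib

section
/- Let 0 < α < γ < 1, let W(x,y) = (1−α)²(xy)^{−α} on (0,1]², and let ρ_n = n^{−γ}. For i ∈ [n], the expected degree of node i in the sparse W-random graph G(W, ρ_n, X_n) equals d_{ni} = ρ_n Σ_{j=1}^n min(ρ_n^{−1}, W(i/n, j/n)). Then for every fixed i ≥ 1, d_{ni} = (1−α) n^{1+α−γ} i^{−α} (1 + o(1)) as n → ∞; that is, lim_{n→∞} d_{ni} · i^{α} n^{−(1+α−γ)} = 1 − α. -/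
/-!
After multiplying by `i^α n^{-(1+α-γ)}` the expected degree becomes
`n^{α-1} ∑_{j ≤ n} min(M_n, (1-α)² j^{-α})` with `M_n = i^α n^{γ-2α}`. Without the truncation
this is a Riemann-type sum: `n^{β-1} ∑_{j ≤ n} j^{-β} → 1/(1-β)` for `0 ≤ β < 1`, by comparison
with `∫₁ⁿ x^{-β} dx`, which gives the limit `(1-α)²/(1-α) = 1-α` as an upper bound. The truncation
only costs `min(M, a) ≥ a - a^{1+ε}/M^ε`, and for small `ε > 0` the resulting error is the same
kind of sum with exponent `α(1+ε) < 1`, damped by the factor `(n^α M_n)^{-ε} = (i^α n^{γ-α})^{-ε}`,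
which tends to `0` because `γ > α`.
-/

open Filter Real Finset

lemma integral_one_to_rpow_neg {β : ℝ} (hβ : β < 1) (n : ℕ) :
    ∫ x in (1 : ℝ)..n, x ^ (-β) = ((n : ℝ) ^ (1 - β) - 1) / (1 - β) := by
  rw [integral_rpow (Or.inl (by linarith)), one_rpow, neg_add_eq_sub]

lemma sum_Icc_rpow_neg_mem_Icc {β : ℝ} (hβ0 : 0 ≤ β) (hβ1 : β < 1) {n : ℕ} (hn : 1 ≤ n) :
    ∑ j ∈ Icc 1 n, (j : ℝ) ^ (-β) ∈
      Set.Icc (((n : ℝ) ^ (1 - β) - 1) / (1 - β)) (((n : ℝ) ^ (1 - β) - 1) / (1 - β) + 1) := by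
  have hanti : AntitoneOn (fun x : ℝ => x ^ (-β)) (Set.Icc (1 : ℕ) n) :=
    (antitoneOn_rpow_Ioi_of_exponent_nonpos (neg_nonpos.2 hβ0)).mono fun x hx =>
      lt_of_lt_of_le one_pos (by exact_mod_cast hx.1)
  have hsplit : ∑ j ∈ Icc 1 n, (j : ℝ) ^ (-β) =
      1 + ∑ j ∈ Ico 1 n, ((j + 1 : ℕ) : ℝ) ^ (-β) := by
    rw [← Ico_add_one_right_eq_Icc, sum_eq_sum_Ico_succ_bot (by omega),
      sum_Ico_add' (fun k : ℕ => (k : ℝ) ^ (-β))]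
    simp
  rw [← integral_one_to_rpow_neg hβ1]
  constructor
  · calc ∫ x in (1 : ℝ)..n, x ^ (-β) ≤ ∑ j ∈ Ico 1 n, (j : ℝ) ^ (-β) := by
          exact_mod_cast hanti.integral_le_sum_Ico hn
      _ ≤ ∑ j ∈ Icc 1 n, (j : ℝ) ^ (-β) :=
          sum_le_sum_of_subset_of_nonneg Ico_subset_Icc_self fun _ _ _ => by positivity
  · rw [hsplit, add_comm]
    gcongr
    exact_mod_cast hanti.sum_le_integral_Ico hn

theorem tendsto_rpow_mul_sum_Icc_rpow_neg {β : ℝ} (hβ0 : 0 ≤ β) (hβ1 : β < 1) :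
    Tendsto (fun n : ℕ => (n : ℝ) ^ (β - 1) * ∑ j ∈ Icc 1 n, (j : ℝ) ^ (-β))
      atTop (nhds (1 / (1 - β))) := by
  have hsmall : Tendsto (fun n : ℕ => (n : ℝ) ^ (β - 1)) atTop (nhds 0) := by
    simpa [Function.comp_def] using
      (tendsto_rpow_neg_atTop (by linarith : 0 < 1 - β)).comp tendsto_natCast_atTop_atTop
  have hlower : Tendsto (fun n : ℕ => (1 - (n : ℝ) ^ (β - 1)) / (1 - β)) atTop
      (nhds (1 / (1 - β))) := by
    simpa using (hsmall.const_sub 1).div_const (1 - β)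
  have hbounds : ∀ᶠ n : ℕ in atTop, (n : ℝ) ^ (β - 1) * ∑ j ∈ Icc 1 n, (j : ℝ) ^ (-β) ∈
      Set.Icc ((1 - (n : ℝ) ^ (β - 1)) / (1 - β))
        ((1 - (n : ℝ) ^ (β - 1)) / (1 - β) + (n : ℝ) ^ (β - 1)) := by
    filter_upwards [eventually_ge_atTop 1] with n hn
    obtain ⟨hlo, hhi⟩ := sum_Icc_rpow_neg_mem_Icc hβ0 hβ1 hn
    have hnpos : (0 : ℝ) < n := by exact_mod_cast hn
    have hscale : (n : ℝ) ^ (β - 1) * (((n : ℝ) ^ (1 - β) - 1) / (1 - β)) =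
        (1 - (n : ℝ) ^ (β - 1)) / (1 - β) := by
      rw [mul_div_assoc', mul_sub, ← rpow_add hnpos, sub_add_sub_cancel', sub_self, rpow_zero,
        mul_one]
    have hnonneg : 0 ≤ (n : ℝ) ^ (β - 1) := by positivity
    constructor
    · rw [← hscale]
      exact mul_le_mul_of_nonneg_left hlo hnonneg
    · calc _ ≤ (n : ℝ) ^ (β - 1) * (((n : ℝ) ^ (1 - β) - 1) / (1 - β) + 1) :=
            mul_le_mul_of_nonneg_left hhi hnonneg
        _ = _ := by rw [mul_add, hscale, mul_one]
  exact tendsto_of_tendsto_of_tendsto_of_le_of_le' hlower (by simpa using hlower.add hsmall)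
    (hbounds.mono fun _ h => h.1) (hbounds.mono fun _ h => h.2)

lemma sub_rpow_div_rpow_le_min {a M ε : ℝ} (ha : 0 ≤ a) (hM : 0 < M) (hε : 0 ≤ ε) :
    a - a ^ (1 + ε) / M ^ ε ≤ min M a := by
  rcases le_total a M with haM | hMa
  · rw [min_eq_right haM]
    have : 0 ≤ a ^ (1 + ε) / M ^ ε := by positivity
    linarith
  · rw [min_eq_left hMa]
    have hratio : 1 ≤ (a / M) ^ ε := one_le_rpow ((one_le_div hM).2 hMa) hε
    have : a ^ (1 + ε) / M ^ ε = a * (a / M) ^ ε := by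
      rw [rpow_add (hM.trans_le hMa), rpow_one, div_rpow ha hM.le]; ring
    nlinarith

lemma rpow_mul_sum_rpow_div_rpow_eq {α ε c M : ℝ} (hc : 0 ≤ c) (hM : 0 < M) {n : ℕ}
    (hn : 0 < n) :
    (n : ℝ) ^ (α - 1) * ∑ j ∈ Icc 1 n, (c * (j : ℝ) ^ (-α)) ^ (1 + ε) / M ^ ε =
      c ^ (1 + ε) * ((n : ℝ) ^ α * M) ^ (-ε) *
        ((n : ℝ) ^ (α * (1 + ε) - 1) * ∑ j ∈ Icc 1 n, (j : ℝ) ^ (-(α * (1 + ε)))) := by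
  have hnpos : (0 : ℝ) < n := by exact_mod_cast hn
  have hterm : ∀ j : ℕ,
      (c * (j : ℝ) ^ (-α)) ^ (1 + ε) = c ^ (1 + ε) * (j : ℝ) ^ (-(α * (1 + ε))) := fun j => by
    rw [mul_rpow hc (by positivity), ← rpow_mul (by positivity), neg_mul]
  have hscale : (n : ℝ) ^ (α * (1 + ε) - 1) = ((n : ℝ) ^ α) ^ ε * (n : ℝ) ^ (α - 1) := by
    rw [← rpow_mul hnpos.le, ← rpow_add hnpos]; ring_nf
  simp_rw [hterm, ← sum_div, ← mul_sum, hscale]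
  rw [rpow_neg (by positivity), mul_rpow (by positivity) hM.le]
  field_simp

theorem tendsto_rpow_mul_sum_Icc_min_rpow_neg {α c : ℝ} (hα0 : 0 ≤ α) (hα1 : α < 1)
    (hc : 0 ≤ c) {M : ℕ → ℝ} (hM : Tendsto (fun n : ℕ => (n : ℝ) ^ α * M n) atTop atTop) :
    Tendsto (fun n : ℕ => (n : ℝ) ^ (α - 1) * ∑ j ∈ Icc 1 n, min (M n) (c * (j : ℝ) ^ (-α)))
      atTop (nhds (c / (1 - α))) := by
  set ε := (1 - α) / 2 with hε
  have hε0 : 0 < ε := by linarith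
  have hβ0 : 0 ≤ α * (1 + ε) := by positivity
  have hβ1 : α * (1 + ε) < 1 := by rw [hε]; nlinarith
  have hmain : Tendsto (fun n : ℕ => (n : ℝ) ^ (α - 1) * ∑ j ∈ Icc 1 n, c * (j : ℝ) ^ (-α))
      atTop (nhds (c / (1 - α))) := by
    simp_rw [← mul_sum, mul_left_comm _ c, ← mul_one_div c]
    exact (tendsto_rpow_mul_sum_Icc_rpow_neg hα0 hα1).const_mul c
  have herr : Tendsto (fun n : ℕ => c ^ (1 + ε) * ((n : ℝ) ^ α * M n) ^ (-ε) *
      ((n : ℝ) ^ (α * (1 + ε) - 1) * ∑ j ∈ Icc 1 n, (j : ℝ) ^ (-(α * (1 + ε)))))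
      atTop (nhds 0) := by
    simpa using ((tendsto_rpow_neg_atTop hε0).comp hM).const_mul (c ^ (1 + ε)) |>.mul
      (tendsto_rpow_mul_sum_Icc_rpow_neg hβ0 hβ1)
  refine tendsto_of_tendsto_of_tendsto_of_le_of_le' (by simpa using hmain.sub herr) hmain ?_ ?_
  · filter_upwards [eventually_ge_atTop 1, hM.eventually_gt_atTop 0] with n hn hnM
    have hMpos : 0 < M n := pos_of_mul_pos_right hnM (by positivity)
    rw [← rpow_mul_sum_rpow_div_rpow_eq hc hMpos hn, ← mul_sub, ← sum_sub_distrib]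
    gcongr with j
    exact sub_rpow_div_rpow_le_min (by positivity) hMpos hε0.le
  · filter_upwards with n
    gcongr
    exact min_le_right _ _

lemma normalized_expected_degree_eq (α γ c : ℝ) {i n : ℕ} (hi : 0 < i) (hn : 0 < n) :
    ((n : ℝ) ^ (-γ) * ∑ j ∈ Icc 1 n,
        min ((n : ℝ) ^ γ) (c * (((i : ℝ) / (n : ℝ)) * ((j : ℝ) / (n : ℝ))) ^ (-α))) *
        (i : ℝ) ^ α * (n : ℝ) ^ (-(1 + α - γ)) =
      (n : ℝ) ^ (α - 1) *
        ∑ j ∈ Icc 1 n, min ((i : ℝ) ^ α * (n : ℝ) ^ (γ - 2 * α)) (c * (j : ℝ) ^ (-α)) := by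
  have hipos : (0 : ℝ) < i := by exact_mod_cast hi
  have hnpos : (0 : ℝ) < n := by exact_mod_cast hn
  have hscale : ∀ S : ℝ, (n : ℝ) ^ (-γ) * S * (i : ℝ) ^ α * (n : ℝ) ^ (-(1 + α - γ)) =
      (n : ℝ) ^ (α - 1) * ((i : ℝ) ^ α * (n : ℝ) ^ (-(2 * α)) * S) := fun S => by
    have hexp : (n : ℝ) ^ (-γ) * (n : ℝ) ^ (-(1 + α - γ)) =
        (n : ℝ) ^ (α - 1) * (n : ℝ) ^ (-(2 * α)) := by
      rw [← rpow_add hnpos, ← rpow_add hnpos]; ring_nf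
    linear_combination (i : ℝ) ^ α * S * hexp
  rw [hscale, mul_sum]
  congr 1
  refine sum_congr rfl fun j hj => ?_
  have hjpos : (0 : ℝ) < j := by exact_mod_cast (mem_Icc.1 hj).1
  rw [mul_min_of_nonneg _ _ (by positivity)]
  congr 1
  · rw [mul_assoc, ← rpow_add hnpos]; ring_nf
  · rw [mul_rpow (by positivity) (by positivity), div_rpow hipos.le hnpos.le,
      div_rpow hjpos.le hnpos.le, rpow_neg hnpos.le, rpow_neg hipos.le, rpow_neg hnpos.le,
      rpow_neg hjpos.le, mul_comm 2 α, rpow_mul hnpos.le, rpow_two]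
    field_simp

/-- For the sparse power-law graphon `W(x,y) = (1-α)²(xy)^{-α}` with
`ρ_n = n^{-γ}`, the expected degree
`d_{ni} = ρ_n ∑_{j=1}^n min(ρ_n⁻¹, W(i/n, j/n))` of a fixed node `i ≥ 1` satisfies
`d_{ni} · i^α · n^{-(1+α-γ)} → 1 - α` as `n → ∞`. -/
theorem expected_degree_power_law (α γ : ℝ) (hα : 0 < α) (hαγ : α < γ) (hγ : γ < 1)
    (i : ℕ) (hi : 1 ≤ i) :
    Tendsto (fun n : ℕ =>
        ((n : ℝ) ^ (-γ) *
            ∑ j ∈ Finset.Icc 1 n,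
              min ((n : ℝ) ^ γ)
                ((1 - α) ^ 2 * (((i : ℝ) / (n : ℝ)) * ((j : ℝ) / (n : ℝ))) ^ (-α))) *
          (i : ℝ) ^ α * (n : ℝ) ^ (-(1 + α - γ)))
      atTop (nhds (1 - α)) := by
  have hM : Tendsto (fun n : ℕ => (n : ℝ) ^ α * ((i : ℝ) ^ α * (n : ℝ) ^ (γ - 2 * α)))
      atTop atTop := by
    refine (((tendsto_rpow_atTop (sub_pos.2 hαγ)).comp tendsto_natCast_atTop_atTop)
      |>.const_mul_atTop (by positivity : (0 : ℝ) < (i : ℝ) ^ α)).congr' ?_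
    filter_upwards [eventually_gt_atTop 0] with n hn
    rw [Function.comp_apply, mul_left_comm, ← rpow_add (by exact_mod_cast hn)]
    ring_nf
  have hlimit := tendsto_rpow_mul_sum_Icc_min_rpow_neg hα.le (hαγ.trans hγ)
    (sq_nonneg (1 - α)) hM
  rw [show (1 - α) ^ 2 / (1 - α) = 1 - α from by rw [pow_two, mul_self_div_self]] at hlimit
  refine hlimit.congr' ?_
  filter_upwards [eventually_gt_atTop 0] with n hn
  exact (normalized_expected_degree_eq α γ _ hi hn).symm
end

section
/- Let p ≥ 2, q = p/(p−1), and let U ∈ L^p(I²) be nonnegative with ∫_I U(x,y) dy = 1 for a.e. x ∈ I. Let D, f : ℝ → ℝ be Lipschitz with constants L_D, L_f, and set L = max(L_D, L_f). Fix τ > 0, g ∈ L^q(I), and define K on the space M = C([0,τ]; L^q(I)) by (Ku)(t) = g + ∫_0^t ( ∫_I U(·,y) D(u(y,s) − u(·,s)) dy + f(u(·,s)) ) ds. Then for all u, v ∈ M: ‖Ku − Kv‖_M ≤ L τ (‖U‖_{L^p(I²)} + 2) ‖u − v‖_M, where ‖·‖_M denotes the supremum over t ∈ [0,τ] of the L^q(I)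 norm. In particular, if τ = (2L(‖U‖_{L^p(I²)} + 2))^{−1}, then K is a contraction with constant 1/2. -/
/-!
The integrand of `K` is Lipschitz on `L^q(I)` with constant `L (‖U‖_{L^p(I²)} + 2)`. Pointwise
in `x`, Hölder's inequality in `y` (using `U ≥ 0` and `∫ U(x,·) = 1`) bounds the difference of the
two integrands by `L ‖U(x,·)‖_p ‖u_s - v_s‖_q + 2L |u_s(x) - v_s(x)|`; the `L^q` norm of
`x ↦ ‖U(x,·)‖_p` is at most its `L^p` norm because `q ≤ p` (this is where `p ≥ 2` enters), and
that `L^p` norm is `‖U‖_{L^p(I²)}` by Fubini. Integrating in time, Minkowski's integral inequality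
contributes the factor `t ≤ τ`.

Continuity of `t ↦ u(t)` in `L^q` bounds `‖u(t)‖_q` on the compact `[0,τ]`, which makes the time
integrands of `Ku` and `Kv` integrable, so that `Ku - Kv` is the time integral of the difference.
-/

open MeasureTheory Set Filter intervalIntegral

/-- Lebesgue measure restricted to the unit interval `I = [0,1]`. -/
noncomputable def mu01 : Measure ℝ := volume.restrict (Set.Icc 0 1)

/-- The product measure on the unit square `I²`. -/
noncomputable def mu2 : Measure (ℝ × ℝ) := mu01.prod mu01

/-- The exponent `q = p/(p-1)` conjugate to `p`, as an extended nonnegative real. -/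
noncomputable def qExp (p : ℝ) : ENNReal := ENNReal.ofReal (p / (p - 1))

/-- The Picard operator `(Kw)(t,x) = g(x) + ∫_0^t (∫_I U(x,y) D(w(y,s)-w(x,s)) dy
+ f(w(x,s))) ds`. -/
noncomputable def picard (U : ℝ → ℝ → ℝ) (D f : ℝ → ℝ) (g : ℝ → ℝ)
    (w : ℝ → ℝ → ℝ) (t x : ℝ) : ℝ :=
  g x + ∫ s in (0 : ℝ)..t, ((∫ y, U x y * D (w s y - w s x) ∂mu01) + f (w s x))

open scoped ENNReal NNReal Topology

instance : IsProbabilityMeasure mu01 := ⟨by simp [mu01, Real.volume_Icc]⟩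

section LpProd

variable {α β E : Type*} [MeasurableSpace α] [MeasurableSpace β] [NormedAddCommGroup E]
  {μ : Measure α} {ν : Measure β} {p : ℝ≥0∞}

theorem eLpNorm_eLpNorm_eq_eLpNorm_uncurry [SFinite ν] (hp : p ≠ ∞) {f : α → β → E}
    (hf : AEStronglyMeasurable (Function.uncurry f) (μ.prod ν)) :
    eLpNorm (fun x => eLpNorm (f x) p ν) p μ = eLpNorm (Function.uncurry f) p (μ.prod ν) := by
  rcases eq_or_ne p 0 with rfl | hp0
  · simp
  have hp' : 0 < p.toReal := ENNReal.toReal_pos hp0 hp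
  simp only [eLpNorm_eq_lintegral_rpow_enorm_toReal hp0 hp, enorm_eq_self]
  rw [lintegral_prod _ (hf.enorm.pow_const _)]
  congr 1
  refine lintegral_congr fun x => ?_
  rw [← ENNReal.rpow_mul, one_div_mul_cancel hp'.ne', ENNReal.rpow_one]
  rfl

theorem MeasureTheory.AEStronglyMeasurable.eLpNorm_of_uncurry [SFinite ν] (hp : p ≠ ∞)
    {f : α → β → E} (hf : AEStronglyMeasurable (Function.uncurry f) (μ.prod ν)) :
    AEStronglyMeasurable (fun x => eLpNorm (f x) p ν) μ := by
  rcases eq_or_ne p 0 with rfl | hp0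
  · simpa using aestronglyMeasurable_const
  simp only [eLpNorm_eq_lintegral_rpow_enorm_toReal hp0 hp]
  exact ((hf.enorm.pow_const _).lintegral_prod_right').pow_const _ |>.aestronglyMeasurable

theorem MeasureTheory.MemLp.ae_memLp_of_uncurry [SFinite ν] (hp : p ≠ ∞) {f : α → β → E}
    (hf : MemLp (Function.uncurry f) p (μ.prod ν)) : ∀ᵐ x ∂μ, MemLp (f x) p ν := by
  rcases eq_or_ne p 0 with rfl | hp0
  · filter_upwards [hf.1.prodMk_left] with x hx using ⟨hx, by simp⟩
  have hp' : 0 < p.toReal := ENNReal.toReal_pos hp0 hp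
  have hfin := hf.2
  rw [← eLpNorm_eLpNorm_eq_eLpNorm_uncurry hp hf.1, eLpNorm_eq_lintegral_rpow_enorm_toReal hp0 hp,
    ENNReal.rpow_lt_top_iff_of_pos (by positivity)] at hfin
  filter_upwards [hf.1.prodMk_left, ae_lt_top'
    ((hf.1.eLpNorm_of_uncurry hp).aemeasurable.enorm.pow_const _) hfin.ne] with x hx hxfin
  rw [enorm_eq_self, ENNReal.rpow_lt_top_iff_of_pos hp'] at hxfin
  exact ⟨hx, hxfin⟩

theorem eLpNorm_uncurry_le_of_ae_eLpNorm_le [SFinite μ] (hp : p ≠ ∞) {F : β → α → E}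
    (hF : AEStronglyMeasurable (Function.uncurry F) (ν.prod μ)) {C : ℝ≥0∞}
    (hC : ∀ᵐ s ∂ν, eLpNorm (F s) p μ ≤ C) :
    eLpNorm (Function.uncurry F) p (ν.prod μ) ≤ C * ν univ ^ (1 / p.toReal) := by
  rcases eq_or_ne p 0 with rfl | hp0
  · simp
  rw [← eLpNorm_eLpNorm_eq_eLpNorm_uncurry hp hF, ← enorm_eq_self C, ← eLpNorm_const' C hp0 hp]
  exact eLpNorm_mono_enorm_ae (hC.mono fun s hs => by rwa [enorm_eq_self, enorm_eq_self])

theorem eLpNorm_integral_le_of_ae_eLpNorm_le [SFinite ν] [SFinite μ] [NormedSpace ℝ E]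
    (hp1 : 1 ≤ p) (hp : p ≠ ∞) {F : β → α → E}
    (hF : AEStronglyMeasurable (Function.uncurry F) (ν.prod μ)) {C : ℝ≥0∞}
    (hC : ∀ᵐ s ∂ν, eLpNorm (F s) p μ ≤ C) :
    eLpNorm (fun x => ∫ s, F s x ∂ν) p μ ≤ ν univ * C := by
  have hp1' : 1 ≤ p.toReal := by simpa using ENNReal.toReal_mono hp hp1
  have hFswap : AEStronglyMeasurable (Function.uncurry fun x s => F s x) (μ.prod ν) :=
    hF.prod_swap
  have hpointwise : ∀ᵐ x ∂μ, ‖∫ s, F s x ∂ν‖ₑ ≤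
      ν univ ^ (1 - 1 / p.toReal) * ‖eLpNorm (fun s => F s x) p ν‖ₑ := by
    filter_upwards [hFswap.prodMk_left] with x hx
    calc ‖∫ s, F s x ∂ν‖ₑ ≤ eLpNorm (fun s => F s x) 1 ν := by
          rw [eLpNorm_one_eq_lintegral_enorm]; exact enorm_integral_le_lintegral_enorm _
      _ ≤ eLpNorm (fun s => F s x) p ν * ν univ ^ (1 / (1 : ℝ≥0∞).toReal - 1 / p.toReal) :=
          eLpNorm_le_eLpNorm_mul_rpow_measure_univ hp1 hx
      _ = _ := by simp [mul_comm]
  calc eLpNorm (fun x => ∫ s, F s x ∂ν) p μ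
      ≤ ν univ ^ (1 - 1 / p.toReal) * eLpNorm (fun x => eLpNorm (fun s => F s x) p ν) p μ :=
        eLpNorm_le_mul_eLpNorm_of_ae_le_mul'' p (hFswap.eLpNorm_of_uncurry hp) hpointwise
    _ = ν univ ^ (1 - 1 / p.toReal) * eLpNorm (Function.uncurry F) p (ν.prod μ) := by
        rw [eLpNorm_eLpNorm_eq_eLpNorm_uncurry hp hFswap, ← eLpNorm_comp_measurePreserving hF
          (Measure.measurePreserving_swap (μ := μ) (ν := ν))]
        rfl
    _ ≤ ν univ ^ (1 - 1 / p.toReal) * (C * ν univ ^ (1 / p.toReal)) := by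
        gcongr; exact eLpNorm_uncurry_le_of_ae_eLpNorm_le hp hF hC
    _ = ν univ * C := by
        have hexp : 0 ≤ 1 - 1 / p.toReal := sub_nonneg.2 ((div_le_one (by positivity)).2 hp1')
        rw [mul_left_comm, ← ENNReal.rpow_add_of_nonneg _ _ hexp (by positivity),
          sub_add_cancel, ENNReal.rpow_one, mul_comm]

end LpProd

theorem IsCompact.exists_forall_eLpNorm_le {X α E : Type*} [TopologicalSpace X]
    [MeasurableSpace α] [NormedAddCommGroup E] {μ : Measure α} {K : Set X} (hK : IsCompact K)
    {p : ℝ≥0∞} (hp : 1 ≤ p) {u : X → α → E} (hu : ∀ t ∈ K, MemLp (u t) p μ)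
    (hcont : ∀ t₀ ∈ K, Tendsto (fun t => eLpNorm (u t - u t₀) p μ) (𝓝[K] t₀) (𝓝 0)) :
    ∃ C ≠ ∞, ∀ t ∈ K, eLpNorm (u t) p μ ≤ C := by
  simpa using hK.induction_on (p := fun s => ∃ C ≠ ∞, ∀ t ∈ s, eLpNorm (u t) p μ ≤ C)
    ⟨0, ENNReal.zero_ne_top, by simp⟩
    (fun s s' hss' ⟨C, hC, hs'⟩ => ⟨C, hC, fun t ht => hs' t (hss' ht)⟩)
    (fun s s' ⟨C, hC, hs⟩ ⟨C', hC', hs'⟩ => ⟨max C C', max_ne_top hC hC', fun t ht =>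
      ht.elim (fun h => (hs t h).trans (le_max_left _ _))
        (fun h => (hs' t h).trans (le_max_right _ _))⟩)
    (fun t₀ ht₀ => ⟨{t | t ∈ K ∧ eLpNorm (u t - u t₀) p μ < 1},
      inter_mem self_mem_nhdsWithin ((hcont t₀ ht₀).eventually (gt_mem_nhds zero_lt_one)),
      1 + eLpNorm (u t₀) p μ, ENNReal.add_ne_top.2 ⟨ENNReal.one_ne_top, (hu t₀ ht₀).2.ne⟩,
      fun t ⟨ht, hlt⟩ => by
        calc eLpNorm (u t) p μ = eLpNorm (u t - u t₀ + u t₀) p μ := by rw [sub_add_cancel]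
          _ ≤ eLpNorm (u t - u t₀) p μ + eLpNorm (u t₀) p μ :=
              eLpNorm_add_le ((hu t ht).1.sub (hu t₀ ht₀).1) (hu t₀ ht₀).1 hp
          _ ≤ 1 + eLpNorm (u t₀) p μ := by gcongr⟩)

-- The time integrand of `picard U D f g w t x` is `fun s => drift mu01 U D f (w s) x`.
noncomputable def drift {α : Type*} [MeasurableSpace α] (μ : Measure α) (U : α → α → ℝ)
    (D f : ℝ → ℝ) (a : α → ℝ) (x : α) : ℝ :=
  ∫ y, U x y * D (a y - a x) ∂μ + f (a x)

section Drift

variable {α : Type*} [MeasurableSpace α] {μ : Measure α} {P Q : ℝ≥0∞} {U : α → α → ℝ}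
  {D f : ℝ → ℝ} {L : ℝ≥0}

theorem LipschitzWith.memLp_comp_sub_const [IsFiniteMeasure μ] (hD : LipschitzWith L D)
    {a : α → ℝ} (ha : MemLp a Q μ) (c : ℝ) : MemLp (fun y => D (a y - c)) Q μ := by
  have hD0 : LipschitzWith L (fun z => D z - D 0) :=
    LipschitzWith.of_dist_le_mul fun z w => by rw [dist_sub_right]; exact hD.dist_le_mul z w
  have := (hD0.comp_memLp (by simp) (ha.sub (memLp_const c))).add (memLp_const (D 0))
  exact this.congr_norm
    (hD.continuous.comp_aestronglyMeasurable (ha.1.sub aestronglyMeasurable_const))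
    (Eventually.of_forall fun y => by simp)

theorem integrable_mul_comp_sub [IsFiniteMeasure μ] [P.HolderConjugate Q] {k : α → ℝ}
    (hk : MemLp k P μ) (hD : LipschitzWith L D) {a : α → ℝ} (ha : MemLp a Q μ) (c : ℝ) :
    Integrable (fun y => k y * D (a y - c)) μ :=
  hk.integrable_mul (hD.memLp_comp_sub_const ha c)

theorem enorm_drift_sub_drift_le [IsFiniteMeasure μ] [P.HolderConjugate Q] {x : α}
    (hU0 : 0 ≤ᵐ[μ] U x) (hUp : MemLp (U x) P μ) (hU1 : ∫ y, U x y ∂μ = 1)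
    (hD : LipschitzWith L D) (hf : LipschitzWith L f) {a b : α → ℝ} (ha : MemLp a Q μ)
    (hb : MemLp b Q μ) :
    ‖drift μ U D f a x - drift μ U D f b x‖ₑ ≤
      L * eLpNorm (a - b) Q μ * eLpNorm (U x) P μ + 2 * L * ‖a x - b x‖ₑ := by
  have hmass : ∫⁻ y, ‖U x y‖ₑ ∂μ = 1 := by
    rw [lintegral_congr_ae (hU0.mono fun y hy => Real.enorm_eq_ofReal hy),
      ← ofReal_integral_eq_lintegral_ofReal (Integrable.of_integral_ne_zero (by simp [hU1])) hU0,
      hU1, ENNReal.ofReal_one]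
  have hHolder : ∫⁻ y, ‖U x y * (a y - b y)‖ₑ ∂μ ≤ eLpNorm (U x) P μ * eLpNorm (a - b) Q μ := by
    have h := eLpNorm_smul_le_mul_eLpNorm (p := P) (q := Q) (r := 1) (ha.1.sub hb.1) hUp.1
    simpa only [eLpNorm_one_eq_lintegral_enorm, Pi.smul_apply, Pi.mul_apply, Pi.sub_apply,
      smul_eq_mul] using h
  have hLip : ∀ y, ‖U x y * (D (a y - a x) - D (b y - b x))‖ₑ ≤
      L * ‖U x y * (a y - b y)‖ₑ + L * ‖a x - b x‖ₑ * ‖U x y‖ₑ := fun y => by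
    have hDy : ‖D (a y - a x) - D (b y - b x)‖ₑ ≤ L * (‖a y - b y‖ₑ + ‖a x - b x‖ₑ) := by
      have h := hD (a y - a x) (b y - b x)
      rw [edist_eq_enorm_sub, edist_eq_enorm_sub,
        show a y - a x - (b y - b x) = (a y - b y) - (a x - b x) by ring] at h
      exact h.trans (mul_le_mul_right enorm_sub_le _)
    calc ‖U x y * (D (a y - a x) - D (b y - b x))‖ₑ
        ≤ ‖U x y‖ₑ * (L * (‖a y - b y‖ₑ + ‖a x - b x‖ₑ)) := by rw [enorm_mul]; gcongr
      _ = L * ‖U x y * (a y - b y)‖ₑ + L * ‖a x - b x‖ₑ * ‖U x y‖ₑ := by rw [enorm_mul]; ring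
  have hf' : ‖f (a x) - f (b x)‖ₑ ≤ L * ‖a x - b x‖ₑ := by
    simpa only [edist_eq_enorm_sub] using hf (a x) (b x)
  have hsplit : drift μ U D f a x - drift μ U D f b x =
      ∫ y, U x y * (D (a y - a x) - D (b y - b x)) ∂μ + (f (a x) - f (b x)) := by
    simp only [drift, mul_sub]
    rw [integral_sub (integrable_mul_comp_sub hUp hD ha _) (integrable_mul_comp_sub hUp hD hb _)]
    ring
  calc ‖drift μ U D f a x - drift μ U D f b x‖ₑ
      ≤ ∫⁻ y, ‖U x y * (D (a y - a x) - D (b y - b x))‖ₑ ∂μ + L * ‖a x - b x‖ₑ := by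
        rw [hsplit]
        exact (enorm_add_le _ _).trans (add_le_add (enorm_integral_le_lintegral_enorm _) hf')
    _ ≤ ∫⁻ y, (L * ‖U x y * (a y - b y)‖ₑ + L * ‖a x - b x‖ₑ * ‖U x y‖ₑ) ∂μ
          + L * ‖a x - b x‖ₑ := by
        gcongr with y; exact hLip y
    _ = L * ∫⁻ y, ‖U x y * (a y - b y)‖ₑ ∂μ + L * ‖a x - b x‖ₑ + L * ‖a x - b x‖ₑ := by
        rw [lintegral_add_left', lintegral_const_mul' _ _ ENNReal.coe_ne_top,
          lintegral_const_mul' _ _ (by finiteness), hmass, mul_one]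
        exact ((hUp.1.mul (ha.1.sub hb.1)).enorm).const_mul _
    _ ≤ L * (eLpNorm (U x) P μ * eLpNorm (a - b) Q μ) + L * ‖a x - b x‖ₑ
          + L * ‖a x - b x‖ₑ := by gcongr
    _ = L * eLpNorm (a - b) Q μ * eLpNorm (U x) P μ + 2 * L * ‖a x - b x‖ₑ := by ring

theorem eLpNorm_drift_sub_drift_le [IsProbabilityMeasure μ] [P.HolderConjugate Q] (hQP : Q ≤ P)
    (hP : P ≠ ∞) (hU0 : ∀ᵐ x ∂μ, 0 ≤ᵐ[μ] U x) (hU : MemLp (Function.uncurry U) P (μ.prod μ))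
    (hU1 : ∀ᵐ x ∂μ, ∫ y, U x y ∂μ = 1) (hD : LipschitzWith L D) (hf : LipschitzWith L f)
    {a b : α → ℝ} (ha : MemLp a Q μ) (hb : MemLp b Q μ) :
    eLpNorm (fun x => drift μ U D f a x - drift μ U D f b x) Q μ ≤
      L * (eLpNorm (Function.uncurry U) P (μ.prod μ) + 2) * eLpNorm (a - b) Q μ := by
  set N := eLpNorm (Function.uncurry U) P (μ.prod μ)
  set c := (L : ℝ≥0∞) * eLpNorm (a - b) Q μ
  have hA : AEStronglyMeasurable (fun x => eLpNorm (U x) P μ) μ := hU.1.eLpNorm_of_uncurry hP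
  have hAN : eLpNorm (fun x => eLpNorm (U x) P μ) Q μ ≤ N :=
    (eLpNorm_le_eLpNorm_of_exponent_le hQP hA).trans_eq
      (eLpNorm_eLpNorm_eq_eLpNorm_uncurry hP hU.1)
  have hd : AEStronglyMeasurable (a - b) μ := ha.1.sub hb.1
  calc eLpNorm (fun x => drift μ U D f a x - drift μ U D f b x) Q μ
      ≤ eLpNorm (fun x => c * eLpNorm (U x) P μ + 2 * L * ‖a x - b x‖ₑ) Q μ := by
        refine eLpNorm_mono_enorm_ae ?_
        filter_upwards [hU0, hU.ae_memLp_of_uncurry hP, hU1] with x hx0 hxp hx1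
        rw [enorm_eq_self]
        exact enorm_drift_sub_drift_le hx0 hxp hx1 hD hf ha hb
    _ ≤ eLpNorm (fun x => c * eLpNorm (U x) P μ) Q μ
          + eLpNorm (fun x => 2 * L * ‖a x - b x‖ₑ) Q μ :=
        eLpNorm_add_le (hA.aemeasurable.const_mul c).aestronglyMeasurable
          (hd.enorm.const_mul _).aestronglyMeasurable (ENNReal.HolderConjugate.one_le Q P)
    _ ≤ c * eLpNorm (fun x => eLpNorm (U x) P μ) Q μ + 2 * L * eLpNorm (a - b) Q μ :=
        add_le_add (eLpNorm_le_mul_eLpNorm_of_ae_le_mul'' Q hA (by simp))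
          (eLpNorm_le_mul_eLpNorm_of_ae_le_mul'' Q hd (by simp))
    _ ≤ c * N + 2 * L * eLpNorm (a - b) Q μ := by gcongr
    _ = L * (N + 2) * eLpNorm (a - b) Q μ := by ring

theorem eLpNorm_drift_le [IsProbabilityMeasure μ] [P.HolderConjugate Q] (hQP : Q ≤ P)
    (hP : P ≠ ∞) (hU0 : ∀ᵐ x ∂μ, 0 ≤ᵐ[μ] U x) (hU : MemLp (Function.uncurry U) P (μ.prod μ))
    (hU1 : ∀ᵐ x ∂μ, ∫ y, U x y ∂μ = 1) (hD : LipschitzWith L D) (hf : LipschitzWith L f)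
    {a : α → ℝ} (ha : MemLp a Q μ) (ha' : AEStronglyMeasurable (drift μ U D f a) μ) :
    eLpNorm (drift μ U D f a) Q μ ≤
      L * (eLpNorm (Function.uncurry U) P (μ.prod μ) + 2) * eLpNorm a Q μ + ‖D 0 + f 0‖ₑ := by
  have hzero : drift μ U D f 0 =ᵐ[μ] fun _ => D 0 + f 0 := by
    filter_upwards [hU1] with x hx
    simp [drift, MeasureTheory.integral_mul_const, hx]
  have hzero' : AEStronglyMeasurable (drift μ U D f 0) μ :=
    aestronglyMeasurable_const.congr hzero.symm
  calc eLpNorm (drift μ U D f a) Q μ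
      = eLpNorm ((fun x => drift μ U D f a x - drift μ U D f 0 x) + drift μ U D f 0) Q μ := by
        congr 1; ext x; simp
    _ ≤ eLpNorm (fun x => drift μ U D f a x - drift μ U D f 0 x) Q μ
          + eLpNorm (drift μ U D f 0) Q μ :=
        eLpNorm_add_le (ha'.sub hzero') hzero' (ENNReal.HolderConjugate.one_le Q P)
    _ ≤ L * (eLpNorm (Function.uncurry U) P (μ.prod μ) + 2) * eLpNorm a Q μ + ‖D 0 + f 0‖ₑ := by
        gcongr
        · simpa using eLpNorm_drift_sub_drift_le hQP hP hU0 hU hU1 hD hf ha MemLp.zero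
        · rw [eLpNorm_congr_ae hzero, eLpNorm_const _ (ENNReal.HolderConjugate.ne_zero Q P)
            (IsProbabilityMeasure.ne_zero μ)]
          simp

end Drift

section DriftInTime

variable {α β : Type*} [MeasurableSpace α] [MeasurableSpace β] {μ : Measure α} {ν : Measure β}
  {U : α → α → ℝ} {D f : ℝ → ℝ} {w : β → α → ℝ}

theorem aestronglyMeasurable_uncurry_drift [SFinite μ] [SFinite ν]
    (hU : AEStronglyMeasurable (Function.uncurry U) (μ.prod μ)) (hD : Continuous D)
    (hf : Continuous f) (hw : AEStronglyMeasurable (Function.uncurry w) (ν.prod μ)) :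
    AEStronglyMeasurable (Function.uncurry fun s => drift μ U D f (w s)) (ν.prod μ) := by
  have hUz : AEStronglyMeasurable (fun z : (β × α) × α => U z.1.2 z.2) ((ν.prod μ).prod μ) :=
    hU.comp_quasiMeasurePreserving
      (QuasiMeasurePreserving.prodMap Measure.quasiMeasurePreserving_snd
        (Measure.QuasiMeasurePreserving.id _))
  have hwy : AEStronglyMeasurable (fun z : (β × α) × α => w z.1.1 z.2) ((ν.prod μ).prod μ) :=
    hw.comp_quasiMeasurePreserving
      (QuasiMeasurePreserving.prodMap Measure.quasiMeasurePreserving_fst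
        (Measure.QuasiMeasurePreserving.id _))
  have hwx : AEStronglyMeasurable (fun z : (β × α) × α => w z.1.1 z.1.2) ((ν.prod μ).prod μ) :=
    hw.comp_quasiMeasurePreserving Measure.quasiMeasurePreserving_fst
  exact (hUz.mul (hD.comp_aestronglyMeasurable (hwy.sub hwx))).integral_prod_right'.add
    (hf.comp_aestronglyMeasurable hw)

theorem ae_integrable_drift_of_ae_eLpNorm_le [IsProbabilityMeasure μ] [IsFiniteMeasure ν]
    {P Q : ℝ≥0∞} [P.HolderConjugate Q] (hQP : Q ≤ P) (hP : P ≠ ∞) (hU0 : ∀ᵐ x ∂μ, 0 ≤ᵐ[μ] U x)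
    (hU : MemLp (Function.uncurry U) P (μ.prod μ)) (hU1 : ∀ᵐ x ∂μ, ∫ y, U x y ∂μ = 1) {L : ℝ≥0}
    (hD : LipschitzWith L D) (hf : LipschitzWith L f)
    (hw : AEStronglyMeasurable (Function.uncurry w) (ν.prod μ))
    (hwQ : ∀ᵐ s ∂ν, MemLp (w s) Q μ) {C : ℝ≥0∞} (hC : C ≠ ∞)
    (hwC : ∀ᵐ s ∂ν, eLpNorm (w s) Q μ ≤ C) :
    ∀ᵐ x ∂μ, Integrable (fun s => drift μ U D f (w s) x) ν := by
  have hG := aestronglyMeasurable_uncurry_drift hU.1 hD.continuous hf.continuous hw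
  have hbound : ∀ᵐ s ∂ν, eLpNorm (drift μ U D f (w s)) Q μ ≤
      L * (eLpNorm (Function.uncurry U) P (μ.prod μ) + 2) * C + ‖D 0 + f 0‖ₑ := by
    filter_upwards [hwQ, hwC, hG.prodMk_left] with s hsQ hsC hsG
    exact (eLpNorm_drift_le hQP hP hU0 hU hU1 hD hf hsQ hsG).trans (by gcongr)
  have hQ : Q ≠ ∞ := ne_top_of_le_ne_top hP hQP
  have hmem : MemLp (Function.uncurry fun s => drift μ U D f (w s)) Q (ν.prod μ) := by
    refine ⟨hG, (eLpNorm_uncurry_le_of_ae_eLpNorm_le hQ hG hbound).trans_lt ?_⟩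
    have := hU.2
    finiteness
  exact (hmem.integrable (ENNReal.HolderConjugate.one_le Q P)).prod_left_ae

end DriftInTime

section Picard

variable {U : ℝ → ℝ → ℝ} {D f g : ℝ → ℝ} {u v : ℝ → ℝ → ℝ}

theorem picard_sub_picard_ae_eq {t : ℝ} (ht : 0 ≤ t)
    (hu : ∀ᵐ x ∂mu01, IntegrableOn (fun s => drift mu01 U D f (u s) x) (Ioc 0 t))
    (hv : ∀ᵐ x ∂mu01, IntegrableOn (fun s => drift mu01 U D f (v s) x) (Ioc 0 t)) :
    (fun x => picard U D f g u t x - picard U D f g v t x) =ᵐ[mu01]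
      fun x => ∫ s in Ioc 0 t, (drift mu01 U D f (u s) x - drift mu01 U D f (v s) x) := by
  filter_upwards [hu, hv] with x hux hvx
  simp only [picard, intervalIntegral.integral_of_le ht]
  rw [add_sub_add_left_eq_sub]
  exact (integral_sub hux hvx).symm

theorem eLpNorm_picard_sub_picard_le {P Q : ℝ≥0∞} [P.HolderConjugate Q] (hQP : Q ≤ P)
    (hP : P ≠ ∞) (hU0 : ∀ᵐ x ∂mu01, 0 ≤ᵐ[mu01] U x)
    (hU : MemLp (Function.uncurry U) P (mu01.prod mu01))
    (hU1 : ∀ᵐ x ∂mu01, ∫ y, U x y ∂mu01 = 1) {L : ℝ≥0} (hD : LipschitzWith L D)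
    (hf : LipschitzWith L f) {t : ℝ} (ht : 0 ≤ t)
    (hum : AEStronglyMeasurable (Function.uncurry u) (volume.prod mu01))
    (hvm : AEStronglyMeasurable (Function.uncurry v) (volume.prod mu01))
    (huQ : ∀ s ∈ Ioc 0 t, MemLp (u s) Q mu01) (hvQ : ∀ s ∈ Ioc 0 t, MemLp (v s) Q mu01)
    (hui : ∀ᵐ x ∂mu01, IntegrableOn (fun s => drift mu01 U D f (u s) x) (Ioc 0 t))
    (hvi : ∀ᵐ x ∂mu01, IntegrableOn (fun s => drift mu01 U D f (v s) x) (Ioc 0 t))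
    {S : ℝ≥0∞} (hS : ∀ s ∈ Ioc 0 t, eLpNorm (u s - v s) Q mu01 ≤ S) :
    eLpNorm (fun x => picard U D f g u t x - picard U D f g v t x) Q mu01 ≤
      ENNReal.ofReal t * (L * (eLpNorm (Function.uncurry U) P (mu01.prod mu01) + 2) * S) := by
  have hrestrict : ∀ w : ℝ → ℝ → ℝ, AEStronglyMeasurable (Function.uncurry w) (volume.prod mu01) →
      AEStronglyMeasurable (Function.uncurry w) ((volume.restrict (Ioc 0 t)).prod mu01) :=
    fun w hw => by rw [Measure.restrict_prod_eq_prod_univ]; exact hw.restrict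
  have hF : AEStronglyMeasurable
      (Function.uncurry fun s x => drift mu01 U D f (u s) x - drift mu01 U D f (v s) x)
      ((volume.restrict (Ioc 0 t)).prod mu01) :=
    (aestronglyMeasurable_uncurry_drift hU.1 hD.continuous hf.continuous (hrestrict u hum)).sub
      (aestronglyMeasurable_uncurry_drift hU.1 hD.continuous hf.continuous (hrestrict v hvm))
  have hvol : ENNReal.ofReal t = volume.restrict (Ioc 0 t) univ := by simp [Real.volume_Ioc]
  rw [eLpNorm_congr_ae (picard_sub_picard_ae_eq ht hui hvi), hvol]
  refine eLpNorm_integral_le_of_ae_eLpNorm_le (ENNReal.HolderConjugate.one_le Q P)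
    (ne_top_of_le_ne_top hP hQP) hF ?_
  filter_upwards [ae_restrict_mem measurableSet_Ioc] with s hs
  exact (eLpNorm_drift_sub_drift_le hQP hP hU0 hU hU1 hD hf (huQ s hs) (hvQ s hs)).trans
    (by gcongr; exact hS s hs)

theorem ae_integrableOn_drift_of_continuous {P Q : ℝ≥0∞} [P.HolderConjugate Q] (hQP : Q ≤ P)
    (hP : P ≠ ∞) (hU0 : ∀ᵐ x ∂mu01, 0 ≤ᵐ[mu01] U x)
    (hU : MemLp (Function.uncurry U) P (mu01.prod mu01))
    (hU1 : ∀ᵐ x ∂mu01, ∫ y, U x y ∂mu01 = 1) {L : ℝ≥0} (hD : LipschitzWith L D)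
    (hf : LipschitzWith L f) {τ : ℝ} {w : ℝ → ℝ → ℝ}
    (hwm : AEStronglyMeasurable (Function.uncurry w) (volume.prod mu01))
    (hwQ : ∀ t ∈ Icc 0 τ, MemLp (w t) Q mu01)
    (hwcont : ∀ t₀ ∈ Icc 0 τ, Tendsto (fun t => eLpNorm (w t - w t₀) Q mu01)
      (𝓝[Icc 0 τ] t₀) (𝓝 0)) :
    ∀ᵐ x ∂mu01, IntegrableOn (fun s => drift mu01 U D f (w s) x) (Icc 0 τ) := by
  obtain ⟨C, hC, hwC⟩ :=
    isCompact_Icc.exists_forall_eLpNorm_le (ENNReal.HolderConjugate.one_le Q P) hwQ hwcont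
  have hwm' :
      AEStronglyMeasurable (Function.uncurry w) ((volume.restrict (Icc 0 τ)).prod mu01) := by
    rw [Measure.restrict_prod_eq_prod_univ]; exact hwm.restrict
  exact ae_integrable_drift_of_ae_eLpNorm_le hQP hP hU0 hU hU1 hD hf hwm'
    (ae_restrict_of_forall_mem measurableSet_Icc hwQ) hC
    (ae_restrict_of_forall_mem measurableSet_Icc hwC)

theorem iSup_eLpNorm_picard_sub_picard_le {P Q : ℝ≥0∞} [P.HolderConjugate Q] (hQP : Q ≤ P)
    (hP : P ≠ ∞) (hU0 : ∀ᵐ x ∂mu01, 0 ≤ᵐ[mu01] U x)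
    (hU : MemLp (Function.uncurry U) P (mu01.prod mu01))
    (hU1 : ∀ᵐ x ∂mu01, ∫ y, U x y ∂mu01 = 1) {L : ℝ≥0} (hD : LipschitzWith L D)
    (hf : LipschitzWith L f) {τ : ℝ}
    (hum : AEStronglyMeasurable (Function.uncurry u) (volume.prod mu01))
    (hvm : AEStronglyMeasurable (Function.uncurry v) (volume.prod mu01))
    (huQ : ∀ t ∈ Icc 0 τ, MemLp (u t) Q mu01) (hvQ : ∀ t ∈ Icc 0 τ, MemLp (v t) Q mu01)
    (hucont : ∀ t₀ ∈ Icc 0 τ, Tendsto (fun t => eLpNorm (u t - u t₀) Q mu01)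
      (𝓝[Icc 0 τ] t₀) (𝓝 0))
    (hvcont : ∀ t₀ ∈ Icc 0 τ, Tendsto (fun t => eLpNorm (v t - v t₀) Q mu01)
      (𝓝[Icc 0 τ] t₀) (𝓝 0)) :
    ⨆ t ∈ Icc 0 τ, eLpNorm (fun x => picard U D f g u t x - picard U D f g v t x) Q mu01 ≤
      ENNReal.ofReal (L * τ) * (eLpNorm (Function.uncurry U) P (mu01.prod mu01) + 2) *
        ⨆ t ∈ Icc 0 τ, eLpNorm (u t - v t) Q mu01 := by
  have hui := ae_integrableOn_drift_of_continuous hQP hP hU0 hU hU1 hD hf hum huQ hucont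
  have hvi := ae_integrableOn_drift_of_continuous hQP hP hU0 hU hU1 hD hf hvm hvQ hvcont
  refine iSup₂_le fun t ht => ?_
  have hsub : Ioc 0 t ⊆ Icc 0 τ := Ioc_subset_Icc_self.trans (Icc_subset_Icc_right ht.2)
  refine (eLpNorm_picard_sub_picard_le hQP hP hU0 hU hU1 hD hf ht.1 hum hvm
    (fun s hs => huQ s (hsub hs)) (fun s hs => hvQ s (hsub hs))
    (hui.mono fun x hx => hx.mono_set hsub) (hvi.mono fun x hx => hx.mono_set hsub)
    (fun s hs => le_biSup (fun s => eLpNorm (u s - v s) Q mu01) (hsub hs))).trans ?_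
  rw [ENNReal.ofReal_mul L.coe_nonneg, ENNReal.ofReal_coe_nnreal]
  exact (mul_le_mul_left (ENNReal.ofReal_le_ofReal ht.2) _).trans_eq (by ring)

end Picard

theorem ENNReal.ofReal_mul_inv_two_mul_mul_add_two {L : ℝ} (hL : 0 < L) {N : ℝ≥0∞}
    (hN : N ≠ ∞) : ENNReal.ofReal (L * (2 * L * (N.toReal + 2))⁻¹) * (N + 2) = 2⁻¹ := by
  have hN2 : N + 2 = ENNReal.ofReal (N.toReal + 2) := by
    rw [ENNReal.ofReal_add ENNReal.toReal_nonneg zero_le_two, ENNReal.ofReal_toReal hN]; simp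
  have hpos : 0 < N.toReal + 2 := by positivity
  rw [hN2, ← ENNReal.ofReal_mul (by positivity),
    show L * (2 * L * (N.toReal + 2))⁻¹ * (N.toReal + 2) = 2⁻¹ by field_simp,
    ENNReal.ofReal_inv_of_pos two_pos, ENNReal.ofReal_ofNat]

theorem picard_contraction_general (p : ℝ) (hp : 2 ≤ p)
    (U : ℝ → ℝ → ℝ) (hUnn : ∀ x y, 0 ≤ U x y)
    (hU : MemLp (fun z : ℝ × ℝ => U z.1 z.2) (ENNReal.ofReal p) mu2)
    (hUnorm : ∀ᵐ x ∂mu01, ∫ y, U x y ∂mu01 = 1)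
    (LD Lf : NNReal) (D f : ℝ → ℝ)
    (hD : LipschitzWith LD D) (hf : LipschitzWith Lf f)
    (τ : ℝ)
    (g : ℝ → ℝ)
    (u v : ℝ → ℝ → ℝ)
    (hum : AEStronglyMeasurable (Function.uncurry u) (volume.prod mu01))
    (hvm : AEStronglyMeasurable (Function.uncurry v) (volume.prod mu01))
    (huq : ∀ t ∈ Icc (0 : ℝ) τ, MemLp (u t) (qExp p) mu01)
    (hvq : ∀ t ∈ Icc (0 : ℝ) τ, MemLp (v t) (qExp p) mu01)
    (hucont : ∀ t₀ ∈ Icc (0 : ℝ) τ,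
      Tendsto (fun t => eLpNorm (fun x => u t x - u t₀ x) (qExp p) mu01)
        (nhdsWithin t₀ (Icc 0 τ)) (nhds 0))
    (hvcont : ∀ t₀ ∈ Icc (0 : ℝ) τ,
      Tendsto (fun t => eLpNorm (fun x => v t x - v t₀ x) (qExp p) mu01)
        (nhdsWithin t₀ (Icc 0 τ)) (nhds 0)) :
    (⨆ t ∈ Icc (0 : ℝ) τ,
        eLpNorm (fun x => picard U D f g u t x - picard U D f g v t x) (qExp p) mu01)
      ≤ ENNReal.ofReal (max (LD : ℝ) (Lf : ℝ) * τ)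
          * (eLpNorm (fun z : ℝ × ℝ => U z.1 z.2) (ENNReal.ofReal p) mu2 + 2)
          * ⨆ t ∈ Icc (0 : ℝ) τ, eLpNorm (fun x => u t x - v t x) (qExp p) mu01
    ∧
    (τ = (2 * max (LD : ℝ) (Lf : ℝ) *
        ((eLpNorm (fun z : ℝ × ℝ => U z.1 z.2) (ENNReal.ofReal p) mu2).toReal + 2))⁻¹ →
      (⨆ t ∈ Icc (0 : ℝ) τ,
          eLpNorm (fun x => picard U D f g u t x - picard U D f g v t x) (qExp p) mu01)
        ≤ 2⁻¹ * ⨆ t ∈ Icc (0 : ℝ) τ, eLpNorm (fun x => u t x - v t x) (qExp p) mu01) := by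
  have hp1 : 1 < p := by linarith
  have : (ENNReal.ofReal p).HolderConjugate (qExp p) :=
    (Real.HolderConjugate.conjExponent hp1).ennrealOfReal
  have hqp : qExp p ≤ ENNReal.ofReal p :=
    ENNReal.ofReal_le_ofReal ((div_le_iff₀ (by linarith)).2 (by nlinarith))
  have hcontraction := iSup_eLpNorm_picard_sub_picard_le (g := g) hqp ENNReal.ofReal_ne_top
    (.of_forall fun x => .of_forall (hUnn x)) hU hUnorm (hD.weaken (le_max_left LD Lf))
    (hf.weaken (le_max_right LD Lf)) hum hvm huq hvq hucont hvcont
  rw [← NNReal.coe_max]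
  refine ⟨hcontraction, fun hτ => ?_⟩
  rcases eq_or_ne (max LD Lf) 0 with hL0 | hL0
  · exact hcontraction.trans (by simp [hL0])
  have hhalf : ENNReal.ofReal (max LD Lf * τ) *
      (eLpNorm (Function.uncurry U) (ENNReal.ofReal p) (mu01.prod mu01) + 2) = 2⁻¹ := by
    rw [hτ]
    exact ENNReal.ofReal_mul_inv_two_mul_mul_add_two (NNReal.coe_pos.2 hL0.bot_lt) hU.2.ne
  rwa [hhalf] at hcontraction

/-- contraction estimate for the Picard operator `K` on
`M = C([0,τ]; L^q(I))`: `‖Ku - Kv‖_M ≤ Lτ(‖U‖_{L^p(I²)} + 2)‖u - v‖_M`, and in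
particular if `τ = (2L(‖U‖_{L^p} + 2))⁻¹` then `K` is a `1/2`-contraction. -/
theorem picard_contraction (p : ℝ) (hp : 2 ≤ p)
    (U : ℝ → ℝ → ℝ) (hUnn : ∀ x y, 0 ≤ U x y)
    (hU : MemLp (fun z : ℝ × ℝ => U z.1 z.2) (ENNReal.ofReal p) mu2)
    (hUnorm : ∀ᵐ x ∂mu01, ∫ y, U x y ∂mu01 = 1)
    (LD Lf : NNReal) (D f : ℝ → ℝ)
    (hD : LipschitzWith LD D) (hf : LipschitzWith Lf f)
    (τ : ℝ) (hτ : 0 < τ)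
    (g : ℝ → ℝ) (hg : MemLp g (qExp p) mu01)
    (u v : ℝ → ℝ → ℝ)
    (hum : AEStronglyMeasurable (Function.uncurry u) (volume.prod mu01))
    (hvm : AEStronglyMeasurable (Function.uncurry v) (volume.prod mu01))
    (huq : ∀ t ∈ Icc (0 : ℝ) τ, MemLp (u t) (qExp p) mu01)
    (hvq : ∀ t ∈ Icc (0 : ℝ) τ, MemLp (v t) (qExp p) mu01)
    (hucont : ∀ t₀ ∈ Icc (0 : ℝ) τ,
      Tendsto (fun t => eLpNorm (fun x => u t x - u t₀ x) (qExp p) mu01)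
        (nhdsWithin t₀ (Icc 0 τ)) (nhds 0))
    (hvcont : ∀ t₀ ∈ Icc (0 : ℝ) τ,
      Tendsto (fun t => eLpNorm (fun x => v t x - v t₀ x) (qExp p) mu01)
        (nhdsWithin t₀ (Icc 0 τ)) (nhds 0)) :
    (⨆ t ∈ Icc (0 : ℝ) τ,
        eLpNorm (fun x => picard U D f g u t x - picard U D f g v t x) (qExp p) mu01)
      ≤ ENNReal.ofReal (max (LD : ℝ) (Lf : ℝ) * τ)
          * (eLpNorm (fun z : ℝ × ℝ => U z.1 z.2) (ENNReal.ofReal p) mu2 + 2)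
          * ⨆ t ∈ Icc (0 : ℝ) τ, eLpNorm (fun x => u t x - v t x) (qExp p) mu01
    ∧
    (τ = (2 * max (LD : ℝ) (Lf : ℝ) *
        ((eLpNorm (fun z : ℝ × ℝ => U z.1 z.2) (ENNReal.ofReal p) mu2).toReal + 2))⁻¹ →
      (⨆ t ∈ Icc (0 : ℝ) τ,
          eLpNorm (fun x => picard U D f g u t x - picard U D f g v t x) (qExp p) mu01)
        ≤ 2⁻¹ * ⨆ t ∈ Icc (0 : ℝ) τ, eLpNorm (fun x => u t x - v t x) (qExp p) mu01) :=
  picard_contraction_general p hp U hUnn hU hUnorm LD Lf D f hD hf τ g u v hum hvm huq hvq hucont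
    hvcont
end

section
/- Let W ∈ L²(I²) be nonnegative and symmetric with G(x) := ∫_I W(x,z) dz ≥ ν > 0 for a.e. x ∈ I, set U(x,y) = W(x,y)/G(x), and let f : ℝ → ℝ be Lipschitz continuous. Suppose u, w : [0,T] → L²(I) are two differentiable curves, each taking values in L^∞(I) with sup_{t∈[0,T]} ‖·‖_{L^∞} finite, both satisfying u′(t) = ∫_I U(·,y)(u(y,t) − u(·,t)) dy + f(u(·,t)) in L²(I) for a.e. t ∈ [0,T]. If u(0) = w(0), then u(t) = w(t) for all t ∈ [0,T]. -/
/-!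
Since `∫ U(x,y) dy = 1`, the right-hand side `φ ↦ ∫ U(·,y) (φ y - φ ·) dy + f ∘ φ` is the
integral operator with kernel `U`, minus the identity, plus the Nemytskii operator of `f`.
As `|U| ≤ |W| / ν`, the Hilbert–Schmidt bound makes the first part `‖W‖₂ / ν`-Lipschitz on
`L²(I)`, so the whole right-hand side is `K`-Lipschitz with `K = ‖W‖₂ / ν + 1 + L_f`.

Hence `h t = ‖u t - w t‖²` satisfies `|h'| ≤ 2K h` wherever both equations hold, that is for
a.e. `t`. Because `u` and `w` are differentiable at every point of `[0,T]`, `h` is the integral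
of `h'`, so `h t ≤ 2K ∫₀ᵗ h`, and Grönwall's inequality applied to `∫₀ᵗ h` gives `h = 0`.
-/

open MeasureTheory Set Filter

open Function
open scoped ENNReal NNReal RealInnerProductSpace Topology

theorem eq_zero_of_le_mul_intervalIntegral {h : ℝ → ℝ} {C T : ℝ}
    (hcont : ContinuousOn h (Icc 0 T)) (hnonneg : ∀ t ∈ Icc 0 T, 0 ≤ h t)
    (hle : ∀ t ∈ Icc 0 T, h t ≤ C * ∫ s in (0 : ℝ)..t, h s) :
    ∀ t ∈ Icc 0 T, h t = 0 := by
  intro t ht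
  have hT : 0 ≤ T := ht.1.trans ht.2
  set F : ℝ → ℝ := fun r => ∫ s in (0 : ℝ)..r, h s
  have hint : ∀ s ∈ Icc 0 T, IntervalIntegrable h volume 0 s := fun s hs =>
    (hcont.mono (by rw [uIcc_of_le hs.1]; exact Icc_subset_Icc_right hs.2)).intervalIntegrable
  have hF_nonneg : ∀ r ∈ Icc 0 T, 0 ≤ F r := fun r hr =>
    intervalIntegral.integral_nonneg hr.1 fun s hs => hnonneg s ⟨hs.1, hs.2.trans hr.2⟩
  have hF_cont : ContinuousOn F (Icc 0 T) := by
    have := intervalIntegral.continuousOn_primitive_interval (μ := volume)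
      (by rw [uIcc_of_le hT]; exact hcont.integrableOn_Icc)
    rwa [uIcc_of_le hT] at this
  have hF_deriv : ∀ r ∈ Ico 0 T, HasDerivWithinAt F (h r) (Ici r) r := by
    intro r hr
    have hnhds : Icc 0 T ∈ 𝓝[>] r :=
      mem_of_superset (Ioo_mem_nhdsGT hr.2) fun s hs => ⟨hr.1.trans hs.1.le, hs.2.le⟩
    exact intervalIntegral.integral_hasDerivWithinAt_right
      (hint r (Ico_subset_Icc_self hr))
      ((hcont.stronglyMeasurableAtFilter_nhdsWithin measurableSet_Icc r).filter_mono
        (nhdsWithin_le_of_mem hnhds))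
      ((hcont r (Ico_subset_Icc_self hr)).mono_of_mem_nhdsWithin hnhds)
  have hF_zero := eq_zero_of_abs_deriv_le_mul_abs_self_of_eq_zero_right hF_cont hF_deriv
    (by simp [F]) fun s hs => by
      rw [Real.norm_eq_abs, Real.norm_eq_abs, abs_of_nonneg (hnonneg s (Ico_subset_Icc_self hs)),
        abs_of_nonneg (hF_nonneg s (Ico_subset_Icc_self hs))]
      exact hle s (Ico_subset_Icc_self hs)
  exact le_antisymm (by simpa [F, hF_zero t ht] using hle t ht) (hnonneg t ht)

theorem eq_zero_of_ae_abs_deriv_le_mul {h h' : ℝ → ℝ} {C T : ℝ}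
    (hderiv : ∀ t ∈ Icc 0 T, HasDerivAt h (h' t) t)
    (hbound : ∀ᵐ t ∂volume.restrict (Ioc 0 T), |h' t| ≤ C * h t)
    (hnonneg : ∀ t ∈ Icc 0 T, 0 ≤ h t) (h0 : h 0 = 0) :
    ∀ t ∈ Icc 0 T, h t = 0 := by
  have hcont : ContinuousOn h (Icc 0 T) := fun t ht =>
    (hderiv t ht).continuousAt.continuousWithinAt
  obtain ⟨M, hM⟩ := isCompact_Icc.exists_bound_of_continuousOn hcont
  refine eq_zero_of_le_mul_intervalIntegral (C := C) hcont hnonneg fun t ht => ?_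
  have hderiv_t : ∀ s ∈ Icc 0 t, HasDerivAt h (h' s) s := fun s hs =>
    hderiv s ⟨hs.1, hs.2.trans ht.2⟩
  have hbound_t : ∀ᵐ s ∂volume.restrict (Ioc 0 t), |h' s| ≤ C * h s :=
    ae_restrict_of_ae_restrict_of_subset (Ioc_subset_Ioc_right ht.2) hbound
  have hh'_int : IntervalIntegrable h' volume 0 t := by
    rw [intervalIntegrable_iff_integrableOn_Ioc_of_le ht.1]
    refine Integrable.mono' (integrable_const (|C| * M)) ?_ ?_
    · refine (measurable_deriv h).aestronglyMeasurable.congr ?_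
      exact ae_restrict_of_forall_mem measurableSet_Ioc fun s hs =>
        (hderiv_t s (Ioc_subset_Icc_self hs)).deriv
    · filter_upwards [hbound_t, ae_restrict_mem measurableSet_Ioc] with s hs hmem
      calc ‖h' s‖ = |h' s| := Real.norm_eq_abs _
        _ ≤ C * h s := hs
        _ ≤ |C| * |h s| := by rw [← abs_mul]; exact le_abs_self _
        _ ≤ |C| * M := by
          gcongr
          exact hM s ⟨hmem.1.le, hmem.2.trans ht.2⟩
  have hh_int : IntervalIntegrable h volume 0 t :=
    (hcont.mono (by rw [uIcc_of_le ht.1]; exact Icc_subset_Icc_right ht.2)).intervalIntegrable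
  calc h t = ∫ s in (0 : ℝ)..t, h' s := by
        rw [intervalIntegral.integral_eq_sub_of_hasDerivAt
          (fun s hs => hderiv_t s (by rwa [uIcc_of_le ht.1] at hs)) hh'_int, h0, sub_zero]
    _ ≤ ∫ s in (0 : ℝ)..t, C * h s := by
        rw [intervalIntegral.integral_of_le ht.1, intervalIntegral.integral_of_le ht.1]
        exact setIntegral_mono_ae_restrict hh'_int.1 (hh_int.const_mul C).1
          (hbound_t.mono fun s hs => (le_abs_self _).trans hs)
    _ = C * ∫ s in (0 : ℝ)..t, h s := intervalIntegral.integral_const_mul C _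

theorem eqOn_Icc_of_ae_norm_deriv_sub_le {E : Type*} [NormedAddCommGroup E]
    [InnerProductSpace ℝ E] {u w u' w' : ℝ → E} {K T : ℝ}
    (hu : ∀ t ∈ Icc 0 T, HasDerivAt u (u' t) t) (hw : ∀ t ∈ Icc 0 T, HasDerivAt w (w' t) t)
    (hbound : ∀ᵐ t ∂volume.restrict (Ioc 0 T), ‖u' t - w' t‖ ≤ K * ‖u t - w t‖)
    (h0 : u 0 = w 0) : EqOn u w (Icc 0 T) := by
  have hsq := eq_zero_of_ae_abs_deriv_le_mul (h := fun t => ‖u t - w t‖ ^ 2) (C := 2 * K)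
    (fun t ht => ((hu t ht).sub (hw t ht)).norm_sq) ?_ (fun t _ => by positivity) (by simp [h0])
  · intro t ht
    simpa [sub_eq_zero] using hsq t ht
  · filter_upwards [hbound] with t ht
    calc |2 * ⟪u t - w t, u' t - w' t⟫| ≤ 2 * (‖u t - w t‖ * ‖u' t - w' t‖) := by
          rw [abs_mul, abs_two]
          gcongr
          exact abs_real_inner_le_norm _ _
      _ ≤ 2 * (‖u t - w t‖ * (K * ‖u t - w t‖)) := by gcongr
      _ = 2 * K * ‖u t - w t‖ ^ 2 := by ring

section ProductSections

variable {α β E : Type*} [MeasurableSpace α] [MeasurableSpace β] [NormedAddCommGroup E]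
  {μ : Measure α} {ρ : Measure β} [SFinite ρ]

theorem eLpNorm_two_rpow_two (f : α → E) :
    eLpNorm f 2 μ ^ (2 : ℝ) = ∫⁻ x, ‖f x‖ₑ ^ (2 : ℝ) ∂μ := by
  simpa using eLpNorm_nnreal_pow_eq_lintegral (f := f) (μ := μ) (p := 2) two_ne_zero

theorem lintegral_eLpNorm_rpow_eq_eLpNorm_uncurry {p : ℝ≥0} (hp : p ≠ 0) {F : α → β → E}
    (hF : AEStronglyMeasurable (uncurry F) (μ.prod ρ)) :
    ∫⁻ x, eLpNorm (F x) p ρ ^ (p : ℝ) ∂μ = eLpNorm (uncurry F) p (μ.prod ρ) ^ (p : ℝ) := by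
  simp_rw [eLpNorm_nnreal_pow_eq_lintegral hp]
  exact (lintegral_prod _ (hF.enorm.pow_const _)).symm

theorem MeasureTheory.MemLp.prodMk_left {p : ℝ≥0} (hp : p ≠ 0) {F : α → β → E}
    (hF : MemLp (uncurry F) p (μ.prod ρ)) : ∀ᵐ x ∂μ, MemLp (F x) p ρ := by
  have hmeas : AEMeasurable (fun x => eLpNorm (F x) p ρ ^ (p : ℝ)) μ := by
    simp_rw [eLpNorm_nnreal_pow_eq_lintegral hp]
    exact (hF.1.enorm.pow_const _).lintegral_prod_right'
  have hfin : ∫⁻ x, eLpNorm (F x) p ρ ^ (p : ℝ) ∂μ ≠ ∞ := by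
    rw [lintegral_eLpNorm_rpow_eq_eLpNorm_uncurry hp hF.1]
    exact ENNReal.rpow_ne_top_of_nonneg p.2 hF.2.ne
  filter_upwards [hF.1.prodMk_left, ae_lt_top' hmeas hfin] with x hx hx_fin
  exact ⟨hx, (ENNReal.rpow_lt_top_iff_of_pos (by positivity)).mp hx_fin⟩

theorem eLpNorm_integral_mul_le {K : α → β → ℝ} {g : β → ℝ}
    (hK : AEStronglyMeasurable (uncurry K) (μ.prod ρ)) (hg : AEStronglyMeasurable g ρ) :
    eLpNorm (fun x => ∫ y, K x y * g y ∂ρ) 2 μ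
      ≤ eLpNorm (uncurry K) 2 (μ.prod ρ) * eLpNorm g 2 ρ := by
  have hrow : ∀ᵐ x ∂μ, ‖∫ y, K x y * g y ∂ρ‖ₑ ≤ eLpNorm (K x) 2 ρ * eLpNorm g 2 ρ := by
    filter_upwards [hK.prodMk_left] with x hx
    calc ‖∫ y, K x y * g y ∂ρ‖ₑ ≤ eLpNorm (K x • g) 1 ρ :=
          (enorm_integral_le_lintegral_enorm _).trans_eq eLpNorm_one_eq_lintegral_enorm.symm
      _ ≤ eLpNorm (K x) 2 ρ * eLpNorm g 2 ρ := eLpNorm_smul_le_mul_eLpNorm hg hx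
  have hsq := lintegral_eLpNorm_rpow_eq_eLpNorm_uncurry (p := 2) two_ne_zero hK
  simp only [ENNReal.coe_ofNat, NNReal.coe_ofNat] at hsq
  have hmeas : AEMeasurable (fun x => eLpNorm (K x) 2 ρ ^ (2 : ℝ)) μ := by
    simp_rw [eLpNorm_two_rpow_two]
    exact (hK.enorm.pow_const _).lintegral_prod_right'
  rw [← ENNReal.rpow_le_rpow_iff (z := 2) two_pos]
  calc eLpNorm (fun x => ∫ y, K x y * g y ∂ρ) 2 μ ^ (2 : ℝ)
      = ∫⁻ x, ‖∫ y, K x y * g y ∂ρ‖ₑ ^ (2 : ℝ) ∂μ := eLpNorm_two_rpow_two _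
    _ ≤ ∫⁻ x, eLpNorm (K x) 2 ρ ^ (2 : ℝ) * eLpNorm g 2 ρ ^ (2 : ℝ) ∂μ := by
        refine lintegral_mono_ae (hrow.mono fun x hx => ?_)
        rw [← ENNReal.mul_rpow_of_nonneg _ _ zero_le_two]
        gcongr
    _ = (eLpNorm (uncurry K) 2 (μ.prod ρ) * eLpNorm g 2 ρ) ^ (2 : ℝ) := by
        rw [lintegral_mul_const'' _ hmeas, ENNReal.mul_rpow_of_nonneg _ _ zero_le_two, hsq]

end ProductSections

section NonlocalField

variable {α : Type*} [MeasurableSpace α] {μ : Measure α} {W : α → α → ℝ}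

noncomputable def normalizedKernel (μ : Measure α) (W : α → α → ℝ) (x y : α) : ℝ :=
  W x y / ∫ z, W x z ∂μ

noncomputable def nonlocalField (μ : Measure α) (W : α → α → ℝ) (f : ℝ → ℝ) (φ : α → ℝ) (x : α) :
    ℝ :=
  (∫ y, normalizedKernel μ W x y * (φ y - φ x) ∂μ) + f (φ x)

theorem memLp_normalizedKernel {x : α} (hWx : MemLp (W x) 2 μ) :
    MemLp (normalizedKernel μ W x) 2 μ := by
  show MemLp (fun y => normalizedKernel μ W x y) 2 μ
  simpa only [normalizedKernel, div_eq_mul_inv] using hWx.mul_const (∫ z, W x z ∂μ)⁻¹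

theorem integral_normalizedKernel_mul_sub [IsFiniteMeasure μ] {x : α} {g : α → ℝ}
    (hWx : MemLp (W x) 2 μ) (hGx : ∫ z, W x z ∂μ ≠ 0) (hg : MemLp g 2 μ) :
    ∫ y, normalizedKernel μ W x y * (g y - g x) ∂μ
      = (∫ y, normalizedKernel μ W x y * g y ∂μ) - g x := by
  have hk := memLp_normalizedKernel hWx
  have hkg : Integrable (fun y => normalizedKernel μ W x y * g y) μ := hk.integrable_mul hg
  have hk_one : ∫ y, normalizedKernel μ W x y ∂μ = 1 := by
    simp only [normalizedKernel]
    rw [integral_div, div_self hGx]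
  simp_rw [mul_sub]
  rw [integral_sub hkg ((hk.integrable one_le_two).mul_const _),
    integral_mul_const, hk_one, one_mul]

theorem nonlocalField_sub_nonlocalField [IsFiniteMeasure μ] {x : α} {f : ℝ → ℝ} {φ ψ : α → ℝ}
    (hWx : MemLp (W x) 2 μ) (hGx : ∫ z, W x z ∂μ ≠ 0) (hφ : MemLp φ 2 μ) (hψ : MemLp ψ 2 μ) :
    nonlocalField μ W f φ x - nonlocalField μ W f ψ x
      = (∫ y, normalizedKernel μ W x y * (φ - ψ) y ∂μ) - (φ - ψ) x + (f (φ x) - f (ψ x)) := by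
  have hk := memLp_normalizedKernel hWx
  have hkφ : Integrable (fun y => normalizedKernel μ W x y * φ y) μ := hk.integrable_mul hφ
  have hkψ : Integrable (fun y => normalizedKernel μ W x y * ψ y) μ := hk.integrable_mul hψ
  simp only [nonlocalField]
  rw [integral_normalizedKernel_mul_sub hWx hGx hφ, integral_normalizedKernel_mul_sub hWx hGx hψ]
  simp only [Pi.sub_apply, mul_sub]
  rw [integral_sub hkφ hkψ]
  ring

theorem aestronglyMeasurable_normalizedKernel [SFinite μ]
    (hW : AEStronglyMeasurable (uncurry W) (μ.prod μ)) :
    AEStronglyMeasurable (uncurry (normalizedKernel μ W)) (μ.prod μ) :=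
  (hW.aemeasurable.div hW.integral_prod_right'.comp_fst.aemeasurable).aestronglyMeasurable

theorem eLpNorm_normalizedKernel_le [SFinite μ] {ν : ℝ} (hν : 0 < ν)
    (hG : ∀ᵐ x ∂μ, ν ≤ ∫ z, W x z ∂μ) :
    eLpNorm (uncurry (normalizedKernel μ W)) 2 (μ.prod μ)
      ≤ eLpNorm (uncurry W) 2 (μ.prod μ) / ENNReal.ofReal ν := by
  have hbound : ∀ᵐ z ∂μ.prod μ, ‖uncurry (normalizedKernel μ W) z‖ ≤ ‖ν⁻¹ • uncurry W z‖ := by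
    filter_upwards [Measure.quasiMeasurePreserving_fst.ae hG] with z hz
    simp only [uncurry, normalizedKernel, Real.norm_eq_abs, smul_eq_mul, abs_div, abs_mul,
      abs_inv, abs_of_pos hν, abs_of_pos (hν.trans_le hz)]
    rw [div_eq_inv_mul]
    gcongr
  calc eLpNorm (uncurry (normalizedKernel μ W)) 2 (μ.prod μ)
      ≤ eLpNorm (ν⁻¹ • uncurry W) 2 (μ.prod μ) := eLpNorm_mono_ae hbound
    _ = _ := by
      rw [eLpNorm_const_smul, div_eq_mul_inv, mul_comm, Real.enorm_eq_ofReal (inv_nonneg.2 hν.le),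
        ENNReal.ofReal_inv_of_pos hν]

theorem eLpNorm_nonlocalField_sub_le [IsFiniteMeasure μ] {ν : ℝ} (hν : 0 < ν)
    (hW : MemLp (uncurry W) 2 (μ.prod μ)) (hG : ∀ᵐ x ∂μ, ν ≤ ∫ z, W x z ∂μ)
    {Lf : ℝ≥0} {f : ℝ → ℝ} (hf : LipschitzWith Lf f) {φ ψ : α → ℝ}
    (hφ : MemLp φ 2 μ) (hψ : MemLp ψ 2 μ) :
    eLpNorm (nonlocalField μ W f φ - nonlocalField μ W f ψ) 2 μ
      ≤ (eLpNorm (uncurry W) 2 (μ.prod μ) / ENNReal.ofReal ν + 1 + Lf) * eLpNorm (φ - ψ) 2 μ := by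
  set v := φ - ψ
  set A := fun x => ∫ y, normalizedKernel μ W x y * v y ∂μ
  set B := fun x => f (φ x) - f (ψ x)
  have hv : MemLp v 2 μ := hφ.sub hψ
  have hU := aestronglyMeasurable_normalizedKernel hW.1
  have hA_meas : AEStronglyMeasurable A μ := (hU.mul hv.1.comp_snd).integral_prod_right'
  have hB_meas : AEStronglyMeasurable B μ :=
    (hf.continuous.comp_aestronglyMeasurable hφ.1).sub
      (hf.continuous.comp_aestronglyMeasurable hψ.1)
  have hA : eLpNorm A 2 μ ≤ eLpNorm (uncurry W) 2 (μ.prod μ) / ENNReal.ofReal ν * eLpNorm v 2 μ :=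
    (eLpNorm_integral_mul_le hU hv.1).trans (by gcongr; exact eLpNorm_normalizedKernel_le hν hG)
  have hB : eLpNorm B 2 μ ≤ Lf * eLpNorm v 2 μ :=
    eLpNorm_le_nnreal_smul_eLpNorm_of_ae_le_mul
      (ae_of_all _ fun x => hf.nndist_le (φ x) (ψ x)) 2
  have heq : nonlocalField μ W f φ - nonlocalField μ W f ψ =ᵐ[μ] A - v + B := by
    filter_upwards [hW.prodMk_left two_ne_zero, hG] with x hWx hGx
    exact nonlocalField_sub_nonlocalField hWx (hν.trans_le hGx).ne' hφ hψ
  calc eLpNorm (nonlocalField μ W f φ - nonlocalField μ W f ψ) 2 μ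
      = eLpNorm (A - v + B) 2 μ := eLpNorm_congr_ae heq
    _ ≤ eLpNorm A 2 μ + eLpNorm v 2 μ + eLpNorm B 2 μ :=
      (eLpNorm_add_le (hA_meas.sub hv.1) hB_meas one_le_two).trans
        (by gcongr; exact eLpNorm_sub_le hA_meas hv.1 one_le_two)
    _ ≤ eLpNorm (uncurry W) 2 (μ.prod μ) / ENNReal.ofReal ν * eLpNorm v 2 μ + eLpNorm v 2 μ
        + Lf * eLpNorm v 2 μ := by gcongr
    _ = _ := by ring

theorem norm_sub_le_of_ae_eq_nonlocalField_sub [IsFiniteMeasure μ] {ν : ℝ} (hν : 0 < ν)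
    (hW : MemLp (uncurry W) 2 (μ.prod μ)) (hG : ∀ᵐ x ∂μ, ν ≤ ∫ z, W x z ∂μ)
    {Lf : ℝ≥0} {f : ℝ → ℝ} (hf : LipschitzWith Lf f) {φ ψ d : Lp ℝ 2 μ}
    (hd : d =ᵐ[μ] nonlocalField μ W f φ - nonlocalField μ W f ψ) :
    ‖d‖ ≤ ((eLpNorm (uncurry W) 2 (μ.prod μ) / ENNReal.ofReal ν).toReal + 1 + Lf) * ‖φ - ψ‖ := by
  have hC : eLpNorm (uncurry W) 2 (μ.prod μ) / ENNReal.ofReal ν ≠ ∞ :=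
    ENNReal.div_ne_top hW.2.ne (ENNReal.ofReal_pos.2 hν).ne'
  rw [Lp.norm_def, Lp.norm_def, eLpNorm_congr_ae hd, eLpNorm_congr_ae (Lp.coeFn_sub φ ψ)]
  refine (ENNReal.toReal_mono ?_ (eLpNorm_nonlocalField_sub_le hν hW hG hf (Lp.memLp φ)
    (Lp.memLp ψ))).trans_eq ?_
  · exact ENNReal.mul_ne_top (by simp [hC]) ((Lp.memLp φ).sub (Lp.memLp ψ)).2.ne
  · rw [ENNReal.toReal_mul, ENNReal.toReal_add (by simp [hC]) ENNReal.coe_ne_top,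
      ENNReal.toReal_add hC ENNReal.one_ne_top]
    simp

end NonlocalField

instance isFiniteMeasure_mu01 : IsFiniteMeasure mu01 := by
  unfold mu01; infer_instance

theorem uniqueness_weak_general (W : ℝ → ℝ → ℝ) (ν : ℝ) (hν : 0 < ν)
    (hW2 : MemLp (fun z : ℝ × ℝ => W z.1 z.2) 2 mu2)
    (hG : ∀ᵐ x ∂mu01, ν ≤ ∫ z, W x z ∂mu01)
    (Lf : NNReal) (f : ℝ → ℝ) (hf : LipschitzWith Lf f)
    (T : ℝ)
    (u w : ℝ → Lp ℝ 2 mu01)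
    (hu : ∃ u' : ℝ → Lp ℝ 2 mu01,
      (∀ t ∈ Icc (0 : ℝ) T, HasDerivAt u (u' t) t) ∧
      ∀ᵐ t ∂(volume.restrict (Ioc (0 : ℝ) T)),
        (u' t : ℝ → ℝ) =ᵐ[mu01]
          fun x => (∫ y, (W x y / ∫ z, W x z ∂mu01)
              * ((u t : ℝ → ℝ) y - (u t : ℝ → ℝ) x) ∂mu01) + f ((u t : ℝ → ℝ) x))
    (hw : ∃ w' : ℝ → Lp ℝ 2 mu01,
      (∀ t ∈ Icc (0 : ℝ) T, HasDerivAt w (w' t) t) ∧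
      ∀ᵐ t ∂(volume.restrict (Ioc (0 : ℝ) T)),
        (w' t : ℝ → ℝ) =ᵐ[mu01]
          fun x => (∫ y, (W x y / ∫ z, W x z ∂mu01)
              * ((w t : ℝ → ℝ) y - (w t : ℝ → ℝ) x) ∂mu01) + f ((w t : ℝ → ℝ) x))
    (h0 : u 0 = w 0) :
    ∀ t ∈ Icc (0 : ℝ) T, u t = w t := by
  obtain ⟨u', hu', hu_eq⟩ := hu
  obtain ⟨w', hw', hw_eq⟩ := hw
  have hbound : ∀ᵐ t ∂volume.restrict (Ioc 0 T), ‖u' t - w' t‖ ≤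
      ((eLpNorm (uncurry W) 2 mu2 / ENNReal.ofReal ν).toReal + 1 + Lf) * ‖u t - w t‖ := by
    filter_upwards [hu_eq, hw_eq] with t hut hwt
    refine norm_sub_le_of_ae_eq_nonlocalField_sub hν hW2 hG hf ?_
    filter_upwards [Lp.coeFn_sub (u' t) (w' t), hut, hwt] with x hx hux hwx
    rw [hx, Pi.sub_apply, hux, hwx]
    rfl
  exact eqOn_Icc_of_ae_norm_deriv_sub_le hu' hw' hbound h0

/-- Uniqueness for the nonlocal equation with kernel
`U(x,y) = W(x,y)/∫_I W(x,z) dz`: if `W ∈ L²(I²)` is nonnegative and symmetric with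
row integrals `≥ ν > 0` a.e., `f` is Lipschitz, and `u, w : [0,T] → L²(I)` are two
differentiable curves with uniformly bounded `L^∞` values, both satisfying
`u'(t) = ∫_I U(·,y)(u(y,t)-u(·,t)) dy + f(u(·,t))` in `L²(I)` for a.e. `t ∈ [0,T]`,
then `u(0) = w(0)` implies `u(t) = w(t)` for all `t ∈ [0,T]`. -/
theorem uniqueness_weak (W : ℝ → ℝ → ℝ) (ν : ℝ) (hν : 0 < ν)
    (hWnn : ∀ᵐ z ∂mu2, 0 ≤ W z.1 z.2)
    (hWsym : ∀ᵐ z ∂mu2, W z.1 z.2 = W z.2 z.1)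
    (hW2 : MemLp (fun z : ℝ × ℝ => W z.1 z.2) 2 mu2)
    (hG : ∀ᵐ x ∂mu01, ν ≤ ∫ z, W x z ∂mu01)
    (Lf : NNReal) (f : ℝ → ℝ) (hf : LipschitzWith Lf f)
    (T : ℝ) (hT : 0 < T)
    (u w : ℝ → Lp ℝ 2 mu01)
    (hubdd : ∃ M : ℝ, ∀ t ∈ Icc (0 : ℝ) T,
      eLpNorm (u t : ℝ → ℝ) ⊤ mu01 ≤ ENNReal.ofReal M)
    (hwbdd : ∃ M : ℝ, ∀ t ∈ Icc (0 : ℝ) T,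
      eLpNorm (w t : ℝ → ℝ) ⊤ mu01 ≤ ENNReal.ofReal M)
    (hu : ∃ u' : ℝ → Lp ℝ 2 mu01,
      (∀ t ∈ Icc (0 : ℝ) T, HasDerivAt u (u' t) t) ∧
      ∀ᵐ t ∂(volume.restrict (Ioc (0 : ℝ) T)),
        (u' t : ℝ → ℝ) =ᵐ[mu01]
          fun x => (∫ y, (W x y / ∫ z, W x z ∂mu01)
              * ((u t : ℝ → ℝ) y - (u t : ℝ → ℝ) x) ∂mu01) + f ((u t : ℝ → ℝ) x))
    (hw : ∃ w' : ℝ → Lp ℝ 2 mu01,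
      (∀ t ∈ Icc (0 : ℝ) T, HasDerivAt w (w' t) t) ∧
      ∀ᵐ t ∂(volume.restrict (Ioc (0 : ℝ) T)),
        (w' t : ℝ → ℝ) =ᵐ[mu01]
          fun x => (∫ y, (W x y / ∫ z, W x z ∂mu01)
              * ((w t : ℝ → ℝ) y - (w t : ℝ → ℝ) x) ∂mu01) + f ((w t : ℝ → ℝ) x))
    (h0 : u 0 = w 0) :
    ∀ t ∈ Icc (0 : ℝ) T, u t = w t :=
  uniqueness_weak_general W ν hν hW2 hG Lf f hf T u w hu hw h0
end
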